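/- Let λ be a partition. Then for every integer n ≥ 0, ch_n(λ) = Σ_{k+l = n+1, k,l ≥ 0} (B_k(1/2)/k!) · (P_l(λ)/l!), where B_k is the k-th Bernoulli polynomial. Explicitly: (1/n!) Σ_{s∈λ} c(s)^n = Σ_{k+l=n+1} (B_k(1/2)/k!) · (1/l!) Σ_{j=1}^{r} ( (a_j+1/2)^l − (−b_j−1/2)^l ). -/

import Mathlib

/-- The Frobenius rank of a partition `μ` (0-indexed): the number of indices `i`
with `i < μ i`. -/
noncomputable def frobeniusRank (μ : ℕ → ℕ) : ℕ := Nat.card {i : ℕ | i < μ i}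

/-- The `j`-th part (0-indexed) of the conjugate partition of `μ`:
`μ' j = #{i : μ i > j}`. -/
noncomputable def conjugatePart (μ : ℕ → ℕ) (j : ℕ) : ℕ := Nat.card {i : ℕ | j < μ i}

/-!
With `F u = B_{n+1}(u) / (n+1)!` one has `F (u + 1) - F u = u ^ n / n!`, so `ch_n(λ)` is the sum
over the boxes of `F (c + 1) - F c`. Cut `λ` into its diagonal hooks: the boxes of row `j` on or
right of the diagonal have contents `0, …, a_j`, those of column `j` below it have contents
`-1, …, -b_j`, so both sums telescope and `ch_n(λ) = Σ_j (F (a_j + 1) - F (-b_j))`. The Appell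
property `B_m(x + y) / m! = Σ_{k+l=m} B_k(x) / k! * y ^ l / l!` at `x = 1/2` expands this into
the right-hand side.
-/

open Finset
open scoped Nat

theorem lt_natCard_setOf_iff_of_antitone {P : ℕ → Prop} (hP : Antitone P) (hN : ∃ N, ¬P N)
    (i : ℕ) : i < Nat.card {i | P i} ↔ P i := by
  classical
  have hfind : ∀ i, P i ↔ i < Nat.find hN := fun i =>
    ⟨fun hi => lt_of_not_ge fun hle => Nat.find_spec hN (hP hle hi),
      fun hi => not_not.mp (Nat.find_min hN hi)⟩
  rw [show {i | P i} = Set.Iio (Nat.find hN) from Set.ext hfind, Nat.card_coe_set_eq,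
    Set.ncard_Iio_nat, hfind]

section Partition

variable {μ : ℕ → ℕ}

theorem lt_frobeniusRank_iff (hμ : Antitone μ) (i : ℕ) : i < frobeniusRank μ ↔ i < μ i :=
  lt_natCard_setOf_iff_of_antitone (fun _ _ hab h => hab.trans_lt (h.trans_le (hμ hab)))
    ⟨μ 0, (hμ (Nat.zero_le _)).not_gt⟩ i

theorem lt_conjugatePart_iff (hμ : Antitone μ) {N : ℕ} (hN : μ N = 0) (i j : ℕ) :
    i < conjugatePart μ j ↔ j < μ i :=
  lt_natCard_setOf_iff_of_antitone (fun _ _ hab h => h.trans_le (hμ hab)) ⟨N, by simp [hN]⟩ i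

variable {M : Type*} [AddCommGroup M]

theorem sum_arms_telescope (hμ : Antitone μ) {N : ℕ} (hN : μ N = 0) (g : ℚ → M) :
    ∑ i ∈ range N, ∑ j ∈ Ico i (μ i), (g ((j : ℚ) - i + 1) - g ((j : ℚ) - i)) =
      ∑ i ∈ range (frobeniusRank μ), (g ((μ i : ℚ) - i) - g 0) := by
  have hrow : ∀ i, ∑ j ∈ Ico i (μ i), (g ((j : ℚ) - i + 1) - g ((j : ℚ) - i)) =
      if i < μ i then g ((μ i : ℚ) - i) - g 0 else 0 := by
    intro i
    split_ifs with h
    · simpa [add_sub_right_comm] using sum_Ico_sub (fun j : ℕ => g ((j : ℚ) - i)) h.le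
    · rw [Ico_eq_empty (by omega), sum_empty]
  rw [sum_congr rfl fun i _ => hrow i, ← sum_filter]
  congr 1
  ext i
  have hμN : N ≤ i → μ i ≤ μ N := fun h => hμ h
  simp only [mem_filter, mem_range, lt_frobeniusRank_iff hμ]
  omega

theorem sum_legs_telescope (hμ : Antitone μ) {N : ℕ} (hN : μ N = 0) (g : ℚ → M) :
    ∑ i ∈ range N, ∑ j ∈ (range (μ i)).filter (· < i),
        (g ((j : ℚ) - i + 1) - g ((j : ℚ) - i)) =
      ∑ j ∈ range (frobeniusRank μ), (g 0 - g ((j : ℚ) + 1 - conjugatePart μ j)) := by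
  rw [sum_comm' (t' := range (frobeniusRank μ))
    (s' := fun j => Ico (j + 1) (conjugatePart μ j))]
  · refine sum_congr rfl fun j hj => ?_
    have hj : j + 1 ≤ conjugatePart μ j := by
      rw [mem_range, lt_frobeniusRank_iff hμ] at hj
      exact (lt_conjugatePart_iff hμ hN j j).mpr hj
    have := sum_Ico_sub (fun i : ℕ => g ((j : ℚ) + 1 - i)) hj
    simp only [Nat.cast_add, Nat.cast_one, sub_self] at this
    rw [← neg_sub, ← this, ← sum_neg_distrib]
    refine sum_congr rfl fun i _ => ?_
    rw [neg_sub]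
    congr 2 <;> ring
  · intro i j
    have hμN : N ≤ i → μ i ≤ μ N := fun h => hμ h
    have hμj : j ≤ i → μ i ≤ μ j := fun h => hμ h
    simp only [mem_filter, mem_range, mem_Ico, lt_frobeniusRank_iff hμ,
      lt_conjugatePart_iff hμ hN]
    omega

theorem sum_boxes_telescope (hμ : Antitone μ) {N : ℕ} (hN : μ N = 0) (g : ℚ → M) :
    ∑ i ∈ range N, ∑ j ∈ range (μ i), (g ((j : ℚ) - i + 1) - g ((j : ℚ) - i)) =
      ∑ j ∈ range (frobeniusRank μ),
        (g ((μ j : ℚ) - j) - g ((j : ℚ) + 1 - conjugatePart μ j)) := by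
  have hsplit : ∀ i (f : ℕ → M), ∑ j ∈ range (μ i), f j =
      ∑ j ∈ (range (μ i)).filter (· < i), f j + ∑ j ∈ Ico i (μ i), f j := by
    intro i f
    rw [← sum_filter_add_sum_filter_not (range (μ i)) (· < i)]
    congr 2
    ext j
    simp only [mem_filter, mem_range, mem_Ico]
    omega
  rw [sum_congr rfl fun i _ => hsplit i _, sum_add_distrib, sum_legs_telescope hμ hN,
    sum_arms_telescope hμ hN, ← sum_add_distrib]
  exact sum_congr rfl fun j _ => sub_add_sub_cancel' _ _ _

end Partition

open PowerSeries in
theorem bernoulli_eval_div_factorial_eq_sum (m : ℕ) (x u : ℚ) :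
    (Polynomial.bernoulli m).eval u / m ! =
      ∑ p ∈ antidiagonal m,
        (Polynomial.bernoulli p.1).eval x / p.1 ! * ((u - x) ^ p.2 / p.2 !) := by
  let E : ℚ → ℚ⟦X⟧ := fun t => mk fun n => (Polynomial.bernoulli n).eval t / (n ! : ℚ)
  have hE : ∀ t, E t * (exp ℚ - 1) = X * rescale t (exp ℚ) := fun t => by
    convert Polynomial.bernoulli_generating_function t using 3 with n
    simp [Polynomial.aeval_def, Polynomial.eval₂_eq_eval_map, div_eq_inv_mul]
  have hexp : exp ℚ - 1 ≠ 0 := fun h => by simpa [coeff_exp] using congrArg (coeff 1) h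
  have hshift : E u = E x * rescale (u - x) (exp ℚ) := by
    refine mul_right_cancel₀ hexp ?_
    rw [mul_right_comm, hE, hE, mul_assoc, exp_mul_exp_eq_exp_add, add_sub_cancel]
  simpa [E, coeff_mul, coeff_exp, div_eq_mul_inv] using congrArg (coeff m) hshift

theorem bernoulli_succ_eval_add_one_div_sub (n : ℕ) (u : ℚ) :
    (Polynomial.bernoulli (n + 1)).eval (u + 1) / (n + 1)! -
      (Polynomial.bernoulli (n + 1)).eval u / (n + 1)! = u ^ n / n ! := by
  have h := Polynomial.bernoulli_eval_one_add (n + 1) u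
  rw [add_comm 1 u, Nat.add_sub_cancel] at h
  rw [← sub_div, h, add_sub_cancel_left, Nat.factorial_succ, Nat.cast_mul,
    mul_div_mul_left _ _ (by positivity)]

/-- For a partition `μ` and every integer `n ≥ 0`:
`ch_n(μ) = Σ_{k+l=n+1} (B_k(1/2)/k!) (P_l(μ)/l!)`, i.e. explicitly
`(1/n!) Σ_{s∈μ} c(s)^n = Σ_{k+l=n+1} (B_k(1/2)/k!) (1/l!) Σ_{j=1}^r ((a_j+1/2)^l - (-b_j-1/2)^l)`,
where `B_k` is the `k`-th Bernoulli polynomial, boxes of row `i` (0-indexed) are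
`(i,j)` with `j < μ i` and content `j - i`, and in the 0-indexed convention
`a_j + 1/2 = μ j - j - 1/2`, `-b_j - 1/2 = -(μ' j - j - 1/2)`. -/
theorem stmt_5 (μ : ℕ → ℕ) (hμ : Antitone μ) (hfin : ∃ N, ∀ i, N ≤ i → μ i = 0)
    (n : ℕ) :
    (1 / (n.factorial : ℚ)) *
        ∑' i : ℕ, ∑ j ∈ Finset.range (μ i), ((j : ℚ) - (i : ℚ)) ^ n =
      ∑ p ∈ Finset.HasAntidiagonal.antidiagonal (n + 1),
        ((Polynomial.bernoulli p.1).eval (1 / 2 : ℚ) / (p.1.factorial : ℚ)) *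
          ((1 / (p.2.factorial : ℚ)) *
            ∑ j ∈ Finset.range (frobeniusRank μ),
              (((μ j : ℚ) - (j : ℚ) - 1 / 2) ^ p.2 -
                (-((conjugatePart μ j : ℚ) - (j : ℚ) - 1 / 2)) ^ p.2)) := by
  obtain ⟨N, hN⟩ := hfin
  let F : ℚ → ℚ := fun u => (Polynomial.bernoulli (n + 1)).eval u / (n + 1)!
  have hrows : ∑' i, ∑ j ∈ range (μ i), ((j : ℚ) - i) ^ n =
      ∑ i ∈ range N, ∑ j ∈ range (μ i), ((j : ℚ) - i) ^ n :=
    tsum_eq_sum fun i hi => by rw [hN i (by simpa using hi), range_zero, sum_empty]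
  calc _ = ∑ i ∈ range N, ∑ j ∈ range (μ i), (F ((j : ℚ) - i + 1) - F ((j : ℚ) - i)) := by
        simp only [hrows, mul_sum, F, bernoulli_succ_eval_add_one_div_sub]
        simp only [one_div, inv_mul_eq_div]
    _ = ∑ j ∈ range (frobeniusRank μ),
          (F ((μ j : ℚ) - j) - F ((j : ℚ) + 1 - conjugatePart μ j)) :=
        sum_boxes_telescope hμ (hN N le_rfl) F
    _ = _ := by
        simp only [F, mul_sum]
        rw [sum_comm]
        refine sum_congr rfl fun j _ => ?_
        rw [bernoulli_eval_div_factorial_eq_sum _ (1 / 2),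
          bernoulli_eval_div_factorial_eq_sum _ (1 / 2), ← sum_sub_distrib]
        refine sum_congr rfl fun p _ => ?_
        ring
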